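/- arXiv:2404.02209 — 6 statements merged into one kernel-verified Lean document; each statement's English description precedes it below -/
import Mathlib

section
/- Let μ > 0 with μ ≠ 4. Let F_μ be the lift of the standard map and let G_μ : ℝ² → ℝ² be its inverse, G_μ(w₁,w₂) = (w₁ − w₂, w₂ − (μ/(2π))·sin(2π(w₁ − w₂))). Then the principal fixed point p = (0,0) of the standard map on the torus has a homoclinic point: there exists z ∈ ℝ² with z ∉ ℤ × ℤ such that the Euclidean infimum distance from the n-th iterate F_μ^[n](z) to the set ℤ × ℤ tends to 0 as n → ∞, and the Euclidean infimum distance from G_μ^[n](z) to ℤ × ℤ tends to 0 as n → ∞. -/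
/-- The lift of the standard map to the plane. -/
noncomputable def stdLift (μ : ℝ) : ℝ × ℝ → ℝ × ℝ := fun p =>
  (p.1 + p.2 + μ / (2 * Real.pi) * Real.sin (2 * Real.pi * p.1),
   p.2 + μ / (2 * Real.pi) * Real.sin (2 * Real.pi * p.1))

/-- The inverse of the lift of the standard map. -/
noncomputable def stdLiftInv (μ : ℝ) : ℝ × ℝ → ℝ × ℝ := fun w =>
  (w.1 - w.2, w.2 - μ / (2 * Real.pi) * Real.sin (2 * Real.pi * (w.1 - w.2)))

/-- The integer lattice ℤ × ℤ inside ℝ². -/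
def intLattice : Set (ℝ × ℝ) := {z | ∃ m n : ℤ, z = ((m : ℝ), (n : ℝ))}

/-- The Euclidean infimum distance from a point of ℝ² to the integer lattice. -/
noncomputable def distToLattice (z : ℝ × ℝ) : ℝ :=
  ⨅ p : ℤ × ℤ, Real.sqrt ((z.1 - p.1) ^ 2 + (z.2 - p.2) ^ 2)

/-!
Orbits of the lift correspond to configurations `x : ℤ → ℝ` with
`x (n + 1) - 2 x n + x (n - 1) = (μ / 2π) sin (2π x n)`, the critical points of the formal action
`∑ (x n - x (n - 1))² / 2 + μ / (2π)² (1 - cos (2π x n))`. We minimize the action over the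
box `x n ∈ [0, 1/2]` for `n ≤ 0`, `x n ∈ [1/2, 1]` for `n ≥ 1`: it is compact, the action is
lower semicontinuous on it, and the unit step from `0` to `1` has finite action. The box
constraints never obstruct the Euler–Lagrange equation: on a wall the sine term vanishes and the
neighbouring constraints give the missing inequality, except at the interface (`x 0 = 1/2` or
`x 1 = 1/2`), where shifting the minimizer by one site yields an admissible minimizer with that
value off the wall. Finite action forces `x n` to approach integers and `x n - x (n - 1) → 0` as
`n → ±∞`, so `(x 0, x 0 - x (-1))` is homoclinic to the lattice; it is not a lattice point
because `x 1 ≥ 1/2`.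
-/

open Real Filter Set Topology Function
open scoped ENNReal

section Calculus

variable {φ : ℝ → ℝ} {s t c d : ℝ}

lemma IsMinOn.hasDerivAt_nonneg_of_lt_right (hmin : IsMinOn φ (Icc s t) c)
    (hφ : HasDerivAt φ d c) (hc : c ∈ Icc s t) (hct : c < t) : 0 ≤ d := by
  have hy : t - c ∈ posTangentConeAt (Icc s t) c := sub_mem_posTangentConeAt_of_segment_subset
    ((convex_Icc s t).segment_subset hc (right_mem_Icc.2 (hc.1.trans hct.le)))
  have h := hmin.localize.hasFDerivWithinAt_nonneg hφ.hasFDerivAt.hasFDerivWithinAt hy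
  rw [ContinuousLinearMap.toSpanSingleton_apply, smul_eq_mul] at h
  exact nonneg_of_mul_nonneg_right h (sub_pos.2 hct)

lemma IsMinOn.hasDerivAt_nonpos_of_left_lt (hmin : IsMinOn φ (Icc s t) c)
    (hφ : HasDerivAt φ d c) (hc : c ∈ Icc s t) (hsc : s < c) : d ≤ 0 := by
  have hy : s - c ∈ posTangentConeAt (Icc s t) c := sub_mem_posTangentConeAt_of_segment_subset
    ((convex_Icc s t).segment_subset hc (left_mem_Icc.2 (hsc.le.trans hc.2)))
  have h := hmin.localize.hasFDerivWithinAt_nonneg hφ.hasFDerivAt.hasFDerivWithinAt hy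
  rw [ContinuousLinearMap.toSpanSingleton_apply, smul_eq_mul] at h
  exact nonpos_of_mul_nonneg_right h (sub_neg.2 hsc)

end Calculus

namespace StandardMap


section Action

variable (V : ℝ → ℝ)

noncomputable def localAction (x : ℤ → ℝ) (n : ℤ) : ℝ :=
  (x n - x (n - 1)) ^ 2 / 2 + V (x n)

noncomputable def action (x : ℤ → ℝ) : ℝ≥0∞ :=
  ∑' n, ENNReal.ofReal (localAction V x n)

variable {V}

lemma localAction_nonneg (hV : ∀ v, 0 ≤ V v) (x : ℤ → ℝ) (n : ℤ) : 0 ≤ localAction V x n :=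
  add_nonneg (by positivity) (hV _)

lemma localAction_update_of_ne (x : ℤ → ℝ) {m n : ℤ} (v : ℝ) (h₀ : m ≠ n) (h₁ : m ≠ n + 1) :
    localAction V (update x n v) m = localAction V x m := by
  rw [localAction, localAction, update_of_ne h₀, update_of_ne (by omega)]

lemma action_comp_add_right (x : ℤ → ℝ) (j : ℤ) : action V (fun m => x (m + j)) = action V x := by
  have h : ∀ m, localAction V (fun m => x (m + j)) m = localAction V x (m + j) := fun m => by
    simp only [localAction, sub_add_eq_add_sub]
  simp only [action, h]
  exact (Equiv.addRight j).tsum_eq fun m => ENNReal.ofReal (localAction V x m)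

lemma lowerSemicontinuous_action (hV : Continuous V) : LowerSemicontinuous (action V) :=
  lowerSemicontinuous_tsum fun n =>
    (ENNReal.continuous_ofReal.comp (by unfold localAction; fun_prop)).lowerSemicontinuous

lemma exists_isMinOn_action (hV : Continuous V) {a b : ℤ → ℝ} (hab : a ≤ b) :
    ∃ x ∈ Icc a b, IsMinOn (action V) (Icc a b) x :=
  (lowerSemicontinuous_action hV).lowerSemicontinuousOn _ |>.exists_isMinOn
    (nonempty_Icc.2 hab) isCompact_Icc

lemma isMinOn_comp_add_right {s : Set (ℤ → ℝ)} {x : ℤ → ℝ} (hmin : IsMinOn (action V) s x)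
    (j : ℤ) : IsMinOn (action V) s (fun m => x (m + j)) :=
  isMinOn_iff.2 fun z hz => (action_comp_add_right x j).trans_le (isMinOn_iff.1 hmin z hz)

lemma tendsto_localAction_cofinite {x : ℤ → ℝ} (hV : ∀ v, 0 ≤ V v) (hfin : action V x ≠ ⊤) :
    Tendsto (localAction V x) cofinite (𝓝 0) := by
  have h := (ENNReal.tendsto_toReal ENNReal.zero_ne_top).comp
    (ENNReal.tendsto_cofinite_zero_of_tsum_ne_top hfin)
  simpa only [comp_def, ENNReal.toReal_ofReal (localAction_nonneg hV x _), ENNReal.toReal_zero]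
    using h

variable {a b x : ℤ → ℝ}

/-- Moving the single site `x n` changes only the two terms of the action that contain it. -/
lemma isMinOn_sitePotential (hV : ∀ v, 0 ≤ V v) (hx : x ∈ Icc a b)
    (hmin : IsMinOn (action V) (Icc a b) x) (hfin : action V x ≠ ⊤) (n : ℤ) :
    IsMinOn (fun v => (v - x (n - 1)) ^ 2 / 2 + (x (n + 1) - v) ^ 2 / 2 + V v)
      (Icc (a n) (b n)) (x n) := by
  refine isMinOn_iff.2 fun v hv => ?_
  set y := update x n v
  have hy : y ∈ Icc a b := ⟨le_update_iff.2 ⟨hv.1, fun m _ => hx.1 m⟩,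
    update_le_iff.2 ⟨hv.2, fun m _ => hx.2 m⟩⟩
  let s : Finset ℤ := {n, n + 1}
  let tail (z : ℤ → ℝ) := ∑' m : ↥(s : Set ℤ)ᶜ, ENNReal.ofReal (localAction V z m)
  have hsplit : ∀ z, action V z = ∑ m ∈ s, ENNReal.ofReal (localAction V z m) + tail z :=
    fun z => (ENNReal.sum_add_tsum_compl _ _).symm
  have htail : tail y = tail x := tsum_congr fun m => by
    have hm : (m : ℤ) ∉ s := m.2
    simp only [s, Finset.mem_insert, Finset.mem_singleton, not_or] at hm
    rw [localAction_update_of_ne x v hm.1 hm.2]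
  have htail_ne_top : tail x ≠ ⊤ := ne_top_of_le_ne_top hfin (hsplit x ▸ le_add_self)
  have hle : ∑ m ∈ s, ENNReal.ofReal (localAction V x m)
      ≤ ∑ m ∈ s, ENNReal.ofReal (localAction V y m) := by
    rw [← ENNReal.add_le_add_iff_right htail_ne_top, ← hsplit, ← htail, ← hsplit]
    exact isMinOn_iff.1 hmin y hy
  have hns : n ≠ n + 1 := by omega
  rw [Finset.sum_pair hns, Finset.sum_pair hns,
    ← ENNReal.ofReal_add (localAction_nonneg hV _ _) (localAction_nonneg hV _ _),
    ← ENNReal.ofReal_add (localAction_nonneg hV _ _) (localAction_nonneg hV _ _),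
    ENNReal.ofReal_le_ofReal_iff (add_nonneg (localAction_nonneg hV _ _)
      (localAction_nonneg hV _ _))] at hle
  simp only [localAction, add_sub_cancel_right, y, update_self,
    update_of_ne (show n - 1 ≠ n by omega), update_of_ne (show n + 1 ≠ n by omega)] at hle
  linarith

lemma hasDerivAt_sitePotential {d : ℝ} (x : ℤ → ℝ) (n : ℤ) (hd : HasDerivAt V d (x n)) :
    HasDerivAt (fun v => (v - x (n - 1)) ^ 2 / 2 + (x (n + 1) - v) ^ 2 / 2 + V v)
      (2 * x n - x (n - 1) - x (n + 1) + d) (x n) := by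
  have h := (((((hasDerivAt_id (x n)).sub_const (x (n - 1))).pow 2).div_const 2).add
    ((((hasDerivAt_id (x n)).const_sub (x (n + 1))).pow 2).div_const 2)).add hd
  refine h.congr_deriv ?_
  simp only [id]
  ring

lemma apply_add_one_le_of_isMinOn_action {d : ℝ} (hV : ∀ v, 0 ≤ V v) (hx : x ∈ Icc a b)
    (hmin : IsMinOn (action V) (Icc a b) x) (hfin : action V x ≠ ⊤) {n : ℤ}
    (hd : HasDerivAt V d (x n)) (hn : x n < b n) :
    x (n + 1) ≤ 2 * x n - x (n - 1) + d := by
  have := (isMinOn_sitePotential hV hx hmin hfin n).hasDerivAt_nonneg_of_lt_right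
    (hasDerivAt_sitePotential x n hd) ⟨hx.1 n, hx.2 n⟩ hn
  linarith

lemma le_apply_add_one_of_isMinOn_action {d : ℝ} (hV : ∀ v, 0 ≤ V v) (hx : x ∈ Icc a b)
    (hmin : IsMinOn (action V) (Icc a b) x) (hfin : action V x ≠ ⊤) {n : ℤ}
    (hd : HasDerivAt V d (x n)) (hn : a n < x n) :
    2 * x n - x (n - 1) + d ≤ x (n + 1) := by
  have := (isMinOn_sitePotential hV hx hmin hfin n).hasDerivAt_nonpos_of_left_lt
    (hasDerivAt_sitePotential x n hd) ⟨hx.1 n, hx.2 n⟩ hn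
  linarith

end Action

section Potential

noncomputable def potential (μ v : ℝ) : ℝ := μ / (2 * π) ^ 2 * (1 - cos (2 * π * v))

variable {μ : ℝ}

lemma potential_nonneg (hμ : 0 ≤ μ) (v : ℝ) : 0 ≤ potential μ v :=
  mul_nonneg (by positivity) (sub_nonneg.2 (cos_le_one _))

lemma continuous_potential (μ : ℝ) : Continuous (potential μ) := by
  unfold potential
  fun_prop

lemma hasDerivAt_potential (μ v : ℝ) :
    HasDerivAt (potential μ) (μ / (2 * π) * sin (2 * π * v)) v := by
  have h := ((((hasDerivAt_id v).const_mul (2 * π)).cos).const_sub 1).const_mul (μ / (2 * π) ^ 2)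
  refine h.congr_deriv ?_
  simp only [id]
  field_simp

lemma sq_sub_round_le (y : ℝ) : (y - round y) ^ 2 ≤ (1 - cos (2 * π * y)) / 8 := by
  have hper : cos (2 * π * y) = cos (2 * π * (y - round y)) := by
    rw [mul_sub, ← cos_sub_int_mul_two_pi _ (round y)]
    ring_nf
  have habs : |2 * π * (y - round y)| ≤ π := by
    rw [abs_mul, abs_of_pos (by positivity)]
    nlinarith [abs_sub_round y, pi_pos]
  have h := cos_le_one_sub_mul_cos_sq habs
  rw [hper]
  field_simp at h ⊢
  nlinarith [pi_pos]

end Potential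

lemma distToLattice_nonneg (z : ℝ × ℝ) : 0 ≤ distToLattice z :=
  Real.iInf_nonneg fun _ => sqrt_nonneg _

lemma distToLattice_le_sqrt (z : ℝ × ℝ) :
    distToLattice z ≤ √((1 - cos (2 * π * z.1)) / 8 + z.2 ^ 2) :=
  calc distToLattice z ≤ √((z.1 - ((round z.1 : ℤ) : ℝ)) ^ 2 + (z.2 - ((0 : ℤ) : ℝ)) ^ 2) :=
        ciInf_le ⟨0, by rintro _ ⟨p, rfl⟩; exact sqrt_nonneg _⟩ (round z.1, 0)
    _ ≤ _ := sqrt_le_sqrt <| by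
        simp only [Int.cast_zero, sub_zero]
        linarith [sq_sub_round_le z.1]

section Orbit

def IsOrbit (μ : ℝ) (x : ℤ → ℝ) : Prop :=
  ∀ n, x (n + 1) = 2 * x n - x (n - 1) + μ / (2 * π) * sin (2 * π * x n)

def phasePoint (x : ℤ → ℝ) (n : ℤ) : ℝ × ℝ := (x n, x n - x (n - 1))

variable {μ : ℝ} {x : ℤ → ℝ}

lemma IsOrbit.stdLift_phasePoint (h : IsOrbit μ x) (n : ℤ) :
    stdLift μ (phasePoint x n) = phasePoint x (n + 1) := by
  simp only [stdLift, phasePoint, add_sub_cancel_right, h n, Prod.mk.injEq]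
  constructor <;> ring

lemma IsOrbit.stdLiftInv_phasePoint (h : IsOrbit μ x) (n : ℤ) :
    stdLiftInv μ (phasePoint x n) = phasePoint x (n - 1) := by
  have hn := h (n - 1)
  rw [sub_add_cancel] at hn
  simp only [stdLiftInv, phasePoint, sub_sub_cancel, Prod.mk.injEq, true_and]
  linarith

lemma IsOrbit.stdLift_iterate_phasePoint (h : IsOrbit μ x) (k : ℕ) :
    (stdLift μ)^[k] (phasePoint x 0) = phasePoint x k := by
  induction k with
  | zero => rfl
  | succ k ih => rw [iterate_succ_apply', ih, h.stdLift_phasePoint, Nat.cast_succ]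

lemma IsOrbit.stdLiftInv_iterate_phasePoint (h : IsOrbit μ x) (k : ℕ) :
    (stdLiftInv μ)^[k] (phasePoint x 0) = phasePoint x (-k) := by
  induction k with
  | zero => rfl
  | succ k ih => rw [iterate_succ_apply', ih, h.stdLiftInv_phasePoint, Nat.cast_succ, neg_add']

lemma tendsto_distToLattice_phasePoint (hμ : 0 < μ) (hfin : action (potential μ) x ≠ ⊤) :
    Tendsto (fun n => distToLattice (phasePoint x n)) cofinite (𝓝 0) := by
  have hL := tendsto_localAction_cofinite (potential_nonneg hμ.le) hfin
  have hc : 0 < μ / (2 * π) ^ 2 := by positivity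
  have hcos : Tendsto (fun n => 1 - cos (2 * π * x n)) cofinite (𝓝 0) := by
    refine squeeze_zero (fun n => sub_nonneg.2 (cos_le_one _)) (fun n => ?_)
      (by simpa using hL.div_const (μ / (2 * π) ^ 2))
    rw [le_div_iff₀ hc]
    unfold localAction potential
    nlinarith [sq_nonneg (x n - x (n - 1))]
  have hmom : Tendsto (fun n => (x n - x (n - 1)) ^ 2) cofinite (𝓝 0) := by
    refine squeeze_zero (fun n => sq_nonneg _) (fun n => ?_) (by simpa using hL.const_mul 2)
    unfold localAction
    linarith [potential_nonneg hμ.le (x n)]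
  refine squeeze_zero (fun n => distToLattice_nonneg _) (fun n => distToLattice_le_sqrt _) ?_
  simpa [phasePoint] using ((hcos.div_const 8).add hmom).sqrt

end Orbit

section Crossing

noncomputable def crossingLower (n : ℤ) : ℝ := if n ≤ 0 then 0 else 1 / 2

noncomputable def crossingUpper (n : ℤ) : ℝ := if n ≤ 0 then 1 / 2 else 1

noncomputable def unitStep (n : ℤ) : ℝ := if n ≤ 0 then 0 else 1

lemma crossingLower_le_crossingUpper : crossingLower ≤ crossingUpper := fun n => by
  unfold crossingLower crossingUpper
  split_ifs <;> norm_num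

lemma unitStep_mem_crossing : unitStep ∈ Icc crossingLower crossingUpper :=
  ⟨fun n => by unfold unitStep crossingLower; split_ifs <;> norm_num,
    fun n => by unfold unitStep crossingUpper; split_ifs <;> norm_num⟩

lemma action_unitStep (μ : ℝ) : action (potential μ) unitStep = ENNReal.ofReal (1 / 2) := by
  have h : ∀ n, localAction (potential μ) unitStep n = if n = 1 then 1 / 2 else 0 := fun n => by
    unfold localAction unitStep potential
    split_ifs <;> first | omega | simp
  rw [action, tsum_eq_single 1 fun n hn => by rw [h, if_neg hn, ENNReal.ofReal_zero], h, if_pos rfl]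

variable {x : ℤ → ℝ} (hx : x ∈ Icc crossingLower crossingUpper)
include hx

lemma crossing_nonneg (n : ℤ) : 0 ≤ x n := by
  have := hx.1 n
  unfold crossingLower at this
  split_ifs at this <;> linarith

lemma crossing_le_one (n : ℤ) : x n ≤ 1 := by
  have := hx.2 n
  unfold crossingUpper at this
  split_ifs at this <;> linarith

lemma crossing_le_half {n : ℤ} (hn : n ≤ 0) : x n ≤ 1 / 2 := by
  simpa [crossingUpper, hn] using hx.2 n

lemma crossing_half_le {n : ℤ} (hn : 0 < n) : 1 / 2 ≤ x n := by
  simpa [crossingLower, hn.not_ge] using hx.1 n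

lemma phasePoint_zero_notMem_intLattice {μ : ℝ} (horb : IsOrbit μ x) :
    phasePoint x 0 ∉ intLattice := by
  have int_eq_zero : ∀ k : ℤ, 0 ≤ (k : ℝ) → (k : ℝ) ≤ 1 / 2 → (k : ℝ) = 0 := fun k h₀ h₁ => by
    have : k = 0 := by
      have : (0 : ℤ) ≤ k := by exact_mod_cast h₀
      have : k < 1 := by exact_mod_cast (show (k : ℝ) < 1 by linarith)
      omega
    simp [this]
  rintro ⟨m, l, hml⟩
  simp only [phasePoint, zero_sub, Prod.mk.injEq] at hml
  have hx₀ : x 0 = 0 := hml.1 ▸ int_eq_zero m (hml.1 ▸ crossing_nonneg hx 0)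
    (hml.1 ▸ crossing_le_half hx le_rfl)
  have hx₁ : x (-1) = 0 := by
    have h : x (-1) = ((-l : ℤ) : ℝ) := by push_cast; linarith
    exact h ▸ int_eq_zero (-l) (h ▸ crossing_nonneg hx _) (h ▸ crossing_le_half hx (by norm_num))
  have h₁ := horb 0
  norm_num [hx₀, hx₁] at h₁
  linarith [crossing_half_le hx (n := 1) one_pos]

variable {μ : ℝ} (hμ : 0 ≤ μ)
  (hmin : IsMinOn (action (potential μ)) (Icc crossingLower crossingUpper) x)
  (hfin : action (potential μ) x ≠ ⊤)
include hμ hmin hfin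

lemma crossing_apply_add_one_le (n : ℤ) :
    x (n + 1) ≤ 2 * x n - x (n - 1) + μ / (2 * π) * sin (2 * π * x n) := by
  have hV := potential_nonneg hμ
  rcases (hx.2 n).lt_or_eq with hlt | heq
  · exact apply_add_one_le_of_isMinOn_action hV hx hmin hfin (hasDerivAt_potential μ _) hlt
  rcases lt_trichotomy n 0 with hn | rfl | hn
  · have h : x n = 1 / 2 := by rw [heq, crossingUpper, if_pos hn.le]
    rw [h, show 2 * π * (1 / 2) = π by ring, sin_pi]
    linarith [crossing_le_half hx (show n + 1 ≤ 0 by omega),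
      crossing_le_half hx (show n - 1 ≤ 0 by omega)]
  · -- `x (· - 1)` is again an admissible minimizer, and in it the value `x 0 = 1 / 2` sits at
    -- site `1`, away from the upper wall.
    have h : x 0 = 1 / 2 := by rw [heq, crossingUpper, if_pos le_rfl]
    have hy : (fun m => x (m + -1)) ∈ Icc crossingLower crossingUpper := by
      refine ⟨fun m => ?_, fun m => ?_⟩
      · unfold crossingLower
        split_ifs with hm
        · exact crossing_nonneg hx _
        · rcases eq_or_ne m 1 with rfl | hm1
          · norm_num [h]
          · exact crossing_half_le hx (by omega)
      · unfold crossingUpper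
        split_ifs with hm
        exacts [crossing_le_half hx (by omega), crossing_le_one hx _]
    have := apply_add_one_le_of_isMinOn_action hV hy (isMinOn_comp_add_right hmin (-1))
      (by rwa [action_comp_add_right]) (n := 1) (hasDerivAt_potential μ _)
      (by norm_num [h, crossingUpper])
    norm_num at this
    exact this
  · have h : x n = 1 := by rw [heq, crossingUpper, if_neg hn.not_ge]
    rw [h, mul_one (2 * π), sin_two_pi]
    linarith [crossing_le_one hx (n + 1), crossing_le_one hx (n - 1)]

lemma crossing_le_apply_add_one (n : ℤ) :
    2 * x n - x (n - 1) + μ / (2 * π) * sin (2 * π * x n) ≤ x (n + 1) := by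
  have hV := potential_nonneg hμ
  rcases (hx.1 n).lt_or_eq with hlt | heq
  · exact le_apply_add_one_of_isMinOn_action hV hx hmin hfin (hasDerivAt_potential μ _) hlt
  rcases lt_trichotomy n 1 with hn | rfl | hn
  · have h : x n = 0 := by rw [← heq, crossingLower, if_pos (by omega)]
    rw [h, mul_zero (2 * π), sin_zero]
    linarith [crossing_nonneg hx (n + 1), crossing_nonneg hx (n - 1)]
  · -- As above, with `x (· + 1)`: the value `x 1 = 1 / 2` moves to site `0`, away from the lower
    -- wall.
    have h : x 1 = 1 / 2 := by rw [← heq, crossingLower, if_neg (by omega)]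
    have hy : (fun m => x (m + 1)) ∈ Icc crossingLower crossingUpper := by
      refine ⟨fun m => ?_, fun m => ?_⟩
      · unfold crossingLower
        split_ifs with hm
        exacts [crossing_nonneg hx _, crossing_half_le hx (by omega)]
      · unfold crossingUpper
        split_ifs with hm
        · rcases eq_or_ne m 0 with rfl | hm0
          · norm_num [h]
          · exact crossing_le_half hx (by omega)
        · exact crossing_le_one hx _
    have := le_apply_add_one_of_isMinOn_action hV hy (isMinOn_comp_add_right hmin 1)
      (by rwa [action_comp_add_right]) (n := 0) (hasDerivAt_potential μ _)
      (by norm_num [h, crossingLower])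
    norm_num at this
    exact this
  · have h : x n = 1 / 2 := by rw [← heq, crossingLower, if_neg (by omega)]
    rw [h, show 2 * π * (1 / 2) = π by ring, sin_pi]
    linarith [crossing_half_le hx (show 0 < n + 1 by omega),
      crossing_half_le hx (show 0 < n - 1 by omega)]

lemma isOrbit_of_isMinOn_crossing : IsOrbit μ x := fun n =>
  le_antisymm (crossing_apply_add_one_le hx hμ hmin hfin n)
    (crossing_le_apply_add_one hx hμ hmin hfin n)

end Crossing

end StandardMap

theorem stdMap_homoclinic_point_general (μ : ℝ) (hμ : 0 < μ) :
    ∃ z : ℝ × ℝ, z ∉ intLattice ∧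
      Filter.Tendsto (fun n : ℕ => distToLattice ((stdLift μ)^[n] z))
        Filter.atTop (nhds 0) ∧
      Filter.Tendsto (fun n : ℕ => distToLattice ((stdLiftInv μ)^[n] z))
        Filter.atTop (nhds 0) := by
  open StandardMap in
  obtain ⟨x, hx, hmin⟩ :=
    exists_isMinOn_action (continuous_potential μ) crossingLower_le_crossingUpper
  have hfin : action (potential μ) x ≠ ⊤ := ne_top_of_le_ne_top (by simp [action_unitStep])
    (isMinOn_iff.1 hmin _ unitStep_mem_crossing)
  have horb := isOrbit_of_isMinOn_crossing hx hμ.le hmin hfin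
  have htail := tendsto_distToLattice_phasePoint hμ hfin
  have hcast : Tendsto (fun k : ℕ => (k : ℤ)) atTop cofinite :=
    Nat.cofinite_eq_atTop ▸ Nat.cast_injective.tendsto_cofinite
  refine ⟨phasePoint x 0, phasePoint_zero_notMem_intLattice hx horb, ?_, ?_⟩
  · simp only [horb.stdLift_iterate_phasePoint]
    exact htail.comp hcast
  · simp only [horb.stdLiftInv_iterate_phasePoint]
    exact htail.comp (neg_injective.tendsto_cofinite.comp hcast)

/-- For `μ > 0`, `μ ≠ 4`, the principal fixed point `p = (0,0)` of the standard map on the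
torus has a homoclinic point. -/
theorem stdMap_homoclinic_point (μ : ℝ) (hμ : 0 < μ) (hμ4 : μ ≠ 4) :
    ∃ z : ℝ × ℝ, z ∉ intLattice ∧
      Filter.Tendsto (fun n : ℕ => distToLattice ((stdLift μ)^[n] z))
        Filter.atTop (nhds 0) ∧
      Filter.Tendsto (fun n : ℕ => distToLattice ((stdLiftInv μ)^[n] z))
        Filter.atTop (nhds 0) :=
  stdMap_homoclinic_point_general μ hμ
end

section
/- Let S be a connected, locally connected Hausdorff topological space, let K be a compact subset of S, and let U be a connected component of S \ K. Then every connected component of S \ U has nonempty intersection with K. Consequently, if K has exactly m connected components, then S \ U has at most m connected components. -/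
open Set

lemma isClosed_connectedComponentIn_of_isClosed {S : Type*} [TopologicalSpace S]
    {F : Set S} (hF : IsClosed F) (y : S) : IsClosed (connectedComponentIn F y) := by
  by_cases hy : y ∈ F
  · rw [connectedComponentIn_eq_image hy]
    exact (hF.isClosedEmbedding_subtypeVal.isClosed_iff_image_isClosed).mp
      isClosed_connectedComponent
  · rw [connectedComponentIn_eq_empty hy]; exact isClosed_empty

/-- Let `S` be a connected, locally connected Hausdorff space, `K ⊆ S` compact, and `U` a
connected component of `S \ K` (a residual domain of `K`). Then every connected component
of `S \ U` meets `K`; consequently, if `K` has exactly `m` connected components, then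
`S \ U` has at most `m` connected components. -/
theorem residual_domain_complement_components
    {S : Type*} [TopologicalSpace S] [ConnectedSpace S] [LocallyConnectedSpace S] [T2Space S]
    (K : Set S) (hK : IsCompact K)
    (U : Set S) (x₀ : S) (hx₀ : x₀ ∈ Kᶜ) (hU : U = connectedComponentIn Kᶜ x₀) :
    (∀ y ∈ Uᶜ, (connectedComponentIn Uᶜ y ∩ K).Nonempty) ∧
    ∀ m : ℕ, {C : Set S | ∃ x ∈ K, C = connectedComponentIn K x}.Finite →
      {C : Set S | ∃ x ∈ K, C = connectedComponentIn K x}.ncard = m →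
      {C : Set S | ∃ y ∈ Uᶜ, C = connectedComponentIn Uᶜ y}.Finite ∧
      {C : Set S | ∃ y ∈ Uᶜ, C = connectedComponentIn Uᶜ y}.ncard ≤ m := by
  have hKc : IsOpen Kᶜ := hK.isClosed.isOpen_compl
  have hUK : U ⊆ Kᶜ := hU ▸ connectedComponentIn_subset Kᶜ x₀
  have hKU : K ⊆ Uᶜ := fun z hz hzU => hUK hzU hz
  have hUc : IsClosed Uᶜ := (hU ▸ hKc.connectedComponentIn).isClosed_compl
  -- Part 1
  have part1 : ∀ y ∈ Uᶜ, (connectedComponentIn Uᶜ y ∩ K).Nonempty := by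
    intro y hy
    by_contra hemp
    rw [Set.not_nonempty_iff_eq_empty] at hemp
    set C := connectedComponentIn Uᶜ y with hC
    have hCK : C ⊆ Kᶜ := fun z hz hzK => by
      have : z ∈ C ∩ K := ⟨hz, hzK⟩
      rw [hemp] at this
      exact this
    have hyC : y ∈ C := mem_connectedComponentIn hy
    have hyKc : y ∈ Kᶜ := hCK hyC
    set V := connectedComponentIn Kᶜ y with hV
    have hVUc : V ⊆ Uᶜ := by
      intro z hzV hzU
      have h1 : connectedComponentIn Kᶜ y = connectedComponentIn Kᶜ z :=
        connectedComponentIn_eq hzV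
      have h2 : connectedComponentIn Kᶜ x₀ = connectedComponentIn Kᶜ z :=
        connectedComponentIn_eq (hU ▸ hzU : z ∈ connectedComponentIn Kᶜ x₀)
      have : V = U := by rw [hV, hU, h1, h2]
      exact hy (this ▸ mem_connectedComponentIn hyKc)
    have hVC : V ⊆ C :=
      isPreconnected_connectedComponentIn.subset_connectedComponentIn
        (mem_connectedComponentIn hyKc) hVUc
    have hCV : C ⊆ V :=
      isPreconnected_connectedComponentIn.subset_connectedComponentIn hyC hCK
    have hCeq : C = V := le_antisymm hCV hVC
    have hCopen : IsOpen C := hCeq ▸ hKc.connectedComponentIn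
    have hCclosed : IsClosed C := isClosed_connectedComponentIn_of_isClosed hUc y
    have : C = univ := (IsClopen.eq_univ ⟨hCclosed, hCopen⟩ ⟨y, hyC⟩)
    have hx₀U : x₀ ∈ U := hU ▸ mem_connectedComponentIn hx₀
    have hx₀C : x₀ ∈ C := this ▸ mem_univ x₀
    exact connectedComponentIn_subset Uᶜ y hx₀C hx₀U
  refine ⟨part1, ?_⟩
  intro m hfin hcard
  set A := {C : Set S | ∃ x ∈ K, C = connectedComponentIn K x} with hA
  set B := {C : Set S | ∃ y ∈ Uᶜ, C = connectedComponentIn Uᶜ y} with hB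
  set φ : Set S → Set S := fun D => ⋃ x ∈ D, connectedComponentIn Uᶜ x with hφ
  have key : ∀ x ∈ K, φ (connectedComponentIn K x) = connectedComponentIn Uᶜ x := by
    intro x hx
    apply subset_antisymm
    · apply Set.iUnion₂_subset
      intro z hz
      have : connectedComponentIn Uᶜ z = connectedComponentIn Uᶜ x := by
        have hsub : connectedComponentIn K x ⊆ connectedComponentIn Uᶜ x :=
          isPreconnected_connectedComponentIn.subset_connectedComponentIn
            (mem_connectedComponentIn hx) ((connectedComponentIn_subset K x).trans hKU)
        exact (connectedComponentIn_eq (hsub hz)).symm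
      exact this ▸ subset_rfl
    · exact Set.subset_iUnion₂ (s := fun x _ => connectedComponentIn Uᶜ x) x
        (mem_connectedComponentIn hx)
  have hBA : B = φ '' A := by
    ext C
    constructor
    · rintro ⟨y, hy, rfl⟩
      obtain ⟨z, hzC, hzK⟩ := part1 y hy
      have : connectedComponentIn Uᶜ z = connectedComponentIn Uᶜ y :=
        (connectedComponentIn_eq hzC).symm
      exact ⟨connectedComponentIn K z, ⟨z, hzK, rfl⟩, by rw [key z hzK, this]⟩
    · rintro ⟨D, ⟨x, hx, rfl⟩, rfl⟩
      exact ⟨x, hKU hx, (key x hx)⟩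
  refine ⟨hBA ▸ hfin.image φ, ?_⟩
  calc B.ncard = (φ '' A).ncard := by rw [hBA]
    _ ≤ A.ncard := Set.ncard_image_le hfin
    _ = m := hcard
end

section
/- Let S be a connected, locally compact Hausdorff topological space and let (P_n) be a decreasing sequence (P_n ⊇ P_{n+1} for all n) of nonempty open connected subsets of S such that the frontier of each P_n in S is compact. Then the following two conditions are equivalent: (i) (P_n) leaves compact subsets of S, i.e., for every compact subset K of S there exists n₀ such that K ∩ P_n = ∅ for all n ≥ n₀; (ii) the intersection over all n of the closures of the P_n in S is empty. -/
/-- For a decreasing sequence `(Pₙ)` of nonempty open connected subsets of a connected,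
locally compact Hausdorff space `S` with compact frontiers, `(Pₙ)` leaves compact subsets
of `S` if and only if `⋂ₙ closure(Pₙ) = ∅`. -/
theorem leaves_compacts_iff_inter_closures_empty
    {S : Type*} [TopologicalSpace S] [ConnectedSpace S] [LocallyCompactSpace S] [T2Space S]
    (P : ℕ → Set S)
    (hdec : ∀ n, P (n + 1) ⊆ P n)
    (hne : ∀ n, (P n).Nonempty)
    (hopen : ∀ n, IsOpen (P n))
    (hconn : ∀ n, IsConnected (P n))
    (hfr : ∀ n, IsCompact (frontier (P n))) :
    (∀ K : Set S, IsCompact K → ∃ n₀, ∀ n ≥ n₀, K ∩ P n = ∅) ↔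
      (⋂ n, closure (P n)) = ∅ := by
  have hanti : Antitone P := antitone_nat_of_succ_le hdec
  constructor
  · intro h
    ext x
    simp only [Set.mem_iInter, Set.mem_empty_iff_false, iff_false]
    intro hx
    obtain ⟨K, hK, hKn⟩ := exists_compact_mem_nhds x
    obtain ⟨n₀, hn⟩ := h K hK
    have hxc : x ∈ closure (P n₀) := hx n₀
    obtain ⟨y, hyK, hyP⟩ := mem_closure_iff_nhds.mp hxc K hKn
    have := hn n₀ le_rfl
    exact (this ▸ (⟨hyK, hyP⟩ : y ∈ K ∩ P n₀) : y ∈ (∅ : Set S))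
  · intro h K hK
    have hempty : K ∩ ⋂ n, closure (P n) = ∅ := by rw [h, Set.inter_empty]
    obtain ⟨n₀, hn₀⟩ := hK.elim_directed_family_closed (fun n => closure (P n))
      (fun n => isClosed_closure) hempty
      ((antitone_nat_of_succ_le fun n => closure_mono (hdec n)).directed_ge)
    refine ⟨n₀, fun n hn => Set.eq_empty_of_subset_empty ?_⟩
    rw [← hn₀]
    exact Set.inter_subset_inter_right _
      (subset_closure.trans (closure_mono (hanti hn)))
end

section
/- For each integer n ≥ 1 let P_n = {z ∈ ℂ : |z| > n} ∪ {z ∈ ℂ : 0 < arg z < 1/n}, where arg is the principal argument. Then: (1) each P_n is an open connected subset of ℂ whose frontier is compact, and the sequence (P_n) is decreasing; (2) the intersection over all n ≥ 1 of the sets P_n is empty; (3) the intersection over all n ≥ 1 of the closures of the P_n equals {z ∈ ℂ : Im z = 0 and Re z ≥ 0}, which is nonempty; in particular (P_n) does not leave compact subsets of ℂ (for instance it meets every circle centered at the origin). -/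
/-- The sets `Pₙ = {|z| > n} ∪ {0 < arg z < 1/n}` of Example 2.2. -/
noncomputable def exP (n : ℕ) : Set ℂ :=
  {z : ℂ | (n : ℝ) < ‖z‖} ∪
  {z : ℂ | 0 < Complex.arg z ∧ Complex.arg z < 1 / (n : ℝ)}

open Complex Metric Set Filter Topology Real

/-!
In polar coordinates `Pₙ` is the image of the union of the convex sets `(n, ∞) × ℝ` and
`(0, ∞) × (0, 1/n)`, which meet, so it is connected; its complement lies in the closed disc of
radius `n`, so its frontier is compact. A fixed `z` lies in no `Pₙ` once `n ≥ ‖z‖` and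
`1/n ≤ arg z` (or `arg z ≤ 0`). If `z ∈ closure Pₙ` with `n > ‖z‖`, then `z` lies in the closed
cone `re ≥ 0`, `0 ≤ im ≤ ‖z‖/n` containing the sector; letting `n → ∞` leaves the nonnegative
real axis, whose points are limits of `r e^{it}` as `t ↓ 0`. Every `Pₙ` meets the
unit circle, so `(Pₙ)` does not leave that compact set.
-/

theorem Complex.continuous_polarCoord_symm : Continuous Complex.polarCoord.symm := by
  have : ⇑Complex.polarCoord.symm =
      fun p : ℝ × ℝ => (p.1 : ℂ) * (Real.cos p.2 + Real.sin p.2 * I) :=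
    funext Complex.polarCoord_symm_apply
  rw [this]
  fun_prop

theorem Complex.arg_polarCoord_symm {p : ℝ × ℝ} (hr : 0 < p.1) (hθ : p.2 ∈ Ioc (-π) π) :
    arg (Complex.polarCoord.symm p) = p.2 := by
  rw [Complex.polarCoord_symm_apply, ofReal_cos, ofReal_sin]
  exact arg_mul_cos_add_sin_mul_I hr hθ

theorem Complex.polarCoord_symm_norm_arg (z : ℂ) : Complex.polarCoord.symm (‖z‖, arg z) = z := by
  rw [Complex.polarCoord_symm_apply, ofReal_cos, ofReal_sin, norm_mul_cos_add_sin_mul_I]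

theorem image_polarCoord_symm_Ioi_prod_univ {r : ℝ} (hr : 0 ≤ r) :
    Complex.polarCoord.symm '' (Ioi r ×ˢ univ) = {z : ℂ | r < ‖z‖} := by
  refine Subset.antisymm ?_ fun z hz => ⟨(‖z‖, arg z), ⟨hz, trivial⟩, polarCoord_symm_norm_arg z⟩
  rintro _ ⟨⟨s, t⟩, ⟨hs, -⟩, rfl⟩
  show r < ‖Complex.polarCoord.symm (s, t)‖
  rwa [norm_polarCoord_symm, abs_of_pos (hr.trans_lt hs)]

theorem image_polarCoord_symm_Ioi_prod_Ioo {θ : ℝ} (hθ : θ ≤ π) :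
    Complex.polarCoord.symm '' (Ioi 0 ×ˢ Ioo 0 θ) = arg ⁻¹' Ioo 0 θ := by
  refine Subset.antisymm ?_ fun z hz => ⟨(‖z‖, arg z), ⟨?_, hz⟩, polarCoord_symm_norm_arg z⟩
  · rintro _ ⟨⟨s, t⟩, ⟨hs, ht⟩, rfl⟩
    rw [mem_preimage, arg_polarCoord_symm hs ⟨by linarith [ht.1, pi_pos], ht.2.le.trans hθ⟩]
    exact ht
  · have hz0 : z ≠ 0 := by
      rintro rfl
      simp at hz
    exact norm_pos_iff.2 hz0

theorem isOpen_arg_preimage_Ioo {θ : ℝ} (hθ : θ ≤ π) : IsOpen (arg ⁻¹' Ioo 0 θ) := by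
  have hsub : arg ⁻¹' Ioo 0 θ ⊆ slitPlane := fun z hz =>
    mem_slitPlane_iff_arg.2 ⟨(hz.2.trans_le hθ).ne, by rintro rfl; simp at hz⟩
  have h := continuousOn_arg.isOpen_inter_preimage isOpen_slitPlane (isOpen_Ioo (a := 0) (b := θ))
  rwa [inter_eq_right.2 hsub] at h

theorem arg_preimage_Ioo_subset {θ : ℝ} (hθ : θ ≤ π / 2) :
    arg ⁻¹' Ioo 0 θ ⊆ {z : ℂ | 0 ≤ z.re ∧ 0 ≤ z.im ∧ z.im ≤ ‖z‖ * θ} := by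
  rintro z ⟨h0, hθz⟩
  refine ⟨abs_arg_le_pi_div_two_iff.1 ?_, arg_nonneg_iff.1 h0.le, ?_⟩
  · rw [abs_of_pos h0]
    linarith
  · rw [← norm_mul_sin_arg]
    exact mul_le_mul_of_nonneg_left ((Real.sin_le h0.le).trans hθz.le) (norm_nonneg z)

theorem mem_closure_arg_preimage_Ioo {θ : ℝ} (h0 : 0 < θ) (hπ : θ ≤ π) {z : ℂ}
    (him : z.im = 0) (hre : 0 ≤ z.re) : z ∈ closure (arg ⁻¹' Ioo 0 θ) := by
  rw [← image_polarCoord_symm_Ioi_prod_Ioo hπ]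
  refine image_closure_subset_closure_image Complex.continuous_polarCoord_symm ⟨(z.re, 0), ?_, ?_⟩
  · rw [closure_prod_eq, closure_Ioi, closure_Ioo h0.ne]
    exact ⟨hre, left_mem_Icc.2 h0.le⟩
  · apply Complex.ext <;> simp [him]

theorem IsOpen.isCompact_frontier_of_compl_closedBall_subset {X : Type*} [PseudoMetricSpace X]
    [ProperSpace X] {U : Set X} (hU : IsOpen U) {x : X} {r : ℝ} (h : (closedBall x r)ᶜ ⊆ U) :
    IsCompact (frontier U) := by
  refine (isCompact_closedBall x r).of_isClosed_subset isClosed_frontier fun y hy => ?_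
  rw [hU.frontier_eq] at hy
  by_contra hy'
  exact hy.2 (h hy')

theorem one_div_natCast_le_pi_div_two (n : ℕ) : 1 / (n : ℝ) ≤ π / 2 := by
  rw [one_div]
  linarith [Nat.cast_inv_le_one (α := ℝ) n, pi_gt_three]

theorem one_div_natCast_le_pi (n : ℕ) : 1 / (n : ℝ) ≤ π :=
  (one_div_natCast_le_pi_div_two n).trans (half_le_self pi_pos.le)

theorem exP_eq (n : ℕ) : exP n = {z : ℂ | n < ‖z‖} ∪ arg ⁻¹' Ioo 0 (1 / n) := rfl

theorem exP_eq_image_polarCoord_symm (n : ℕ) :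
    exP n = Complex.polarCoord.symm '' (Ioi (n : ℝ) ×ˢ univ ∪ Ioi 0 ×ˢ Ioo 0 (1 / (n : ℝ))) := by
  rw [image_union, image_polarCoord_symm_Ioi_prod_univ n.cast_nonneg,
    image_polarCoord_symm_Ioi_prod_Ioo (one_div_natCast_le_pi n), exP_eq]

theorem isOpen_exP (n : ℕ) : IsOpen (exP n) :=
  (isOpen_lt continuous_const continuous_norm).union
    (isOpen_arg_preimage_Ioo (one_div_natCast_le_pi n))

theorem isConnected_exP {n : ℕ} (hn : 1 ≤ n) : IsConnected (exP n) := by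
  obtain ⟨t, ht⟩ := exists_between (one_div_pos.2 (Nat.cast_pos.2 hn) : (0 : ℝ) < 1 / n)
  have hout : ((n : ℝ) + 1, t) ∈ Ioi (n : ℝ) ×ˢ univ := ⟨mem_Ioi.2 (lt_add_one _), mem_univ _⟩
  have hsec : ((n : ℝ) + 1, t) ∈ Ioi (0 : ℝ) ×ˢ Ioo 0 (1 / (n : ℝ)) :=
    ⟨mem_Ioi.2 (by positivity), ht⟩
  rw [exP_eq_image_polarCoord_symm]
  refine IsConnected.image ?_ _ Complex.continuous_polarCoord_symm.continuousOn
  exact IsConnected.union ⟨_, hout, hsec⟩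
    (((convex_Ioi _).prod convex_univ).isConnected ⟨_, hout⟩)
    (((convex_Ioi _).prod (convex_Ioo _ _)).isConnected ⟨_, hsec⟩)

theorem isCompact_frontier_exP (n : ℕ) : IsCompact (frontier (exP n)) :=
  (isOpen_exP n).isCompact_frontier_of_compl_closedBall_subset (x := 0) (r := n)
    fun z hz => Or.inl (by simpa using hz)

theorem exP_subset_exP {m n : ℕ} (hm : 1 ≤ m) (hmn : m ≤ n) : exP n ⊆ exP m := by
  have hmn' : (m : ℝ) ≤ n := Nat.cast_le.2 hmn
  refine union_subset_union (fun z hz => hmn'.trans_lt hz) fun z hz => ⟨hz.1, hz.2.trans_le ?_⟩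
  exact one_div_le_one_div_of_le (Nat.cast_pos.2 hm) hmn'

theorem eventually_notMem_exP (z : ℂ) : ∀ᶠ n : ℕ in atTop, z ∉ exP n := by
  have hnorm : ∀ᶠ n : ℕ in atTop, ‖z‖ ≤ n :=
    tendsto_natCast_atTop_atTop.eventually_ge_atTop _
  have harg : ∀ᶠ n : ℕ in atTop, arg z ∉ Ioo 0 (1 / (n : ℝ)) := by
    by_cases h : 0 < arg z
    · filter_upwards [tendsto_one_div_atTop_nhds_zero_nat.eventually (gt_mem_nhds h)]
        with n hn hmem using hn.not_gt hmem.2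
    · exact Eventually.of_forall fun n hmem => h hmem.1
  filter_upwards [hnorm, harg] with n hn hn' hz
  rcases hz with hz | hz
  · exact hn.not_gt hz
  · exact hn' hz

theorem closure_exP_subset (n : ℕ) : closure (exP n) ⊆
    {z : ℂ | n ≤ ‖z‖} ∪ {z : ℂ | 0 ≤ z.re ∧ 0 ≤ z.im ∧ z.im ≤ ‖z‖ * (1 / n)} := by
  refine closure_minimal (union_subset_union (fun _ hz => (le_of_lt hz : (n : ℝ) ≤ _))
    (arg_preimage_Ioo_subset (one_div_natCast_le_pi_div_two n))) ?_
  exact (isClosed_le continuous_const continuous_norm).union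
    ((isClosed_le continuous_const continuous_re).inter ((isClosed_le continuous_const
      continuous_im).inter (isClosed_le continuous_im (continuous_norm.mul continuous_const))))

theorem iInter_closure_exP :
    ⋂ (n : ℕ) (_ : 1 ≤ n), closure (exP n) = {z : ℂ | z.im = 0 ∧ 0 ≤ z.re} := by
  refine Subset.antisymm (fun z hz => ?_) fun z hz => mem_iInter₂.2 fun n hn =>
    closure_mono subset_union_right (mem_closure_arg_preimage_Ioo
      (one_div_pos.2 (Nat.cast_pos.2 hn)) (one_div_natCast_le_pi n) hz.1 hz.2)
  have hcone : ∀ᶠ n : ℕ in atTop, 0 ≤ z.re ∧ 0 ≤ z.im ∧ z.im ≤ ‖z‖ / n := by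
    filter_upwards [eventually_ge_atTop 1, tendsto_natCast_atTop_atTop.eventually_gt_atTop ‖z‖]
      with n hn hzn
    rcases closure_exP_subset n (mem_iInter₂.1 hz n hn) with h | h
    · exact absurd h hzn.not_ge
    · simpa only [mem_ofPred_eq, mul_one_div] using h
  obtain ⟨n, hre, him, -⟩ := hcone.exists
  have him' : z.im ≤ 0 :=
    ge_of_tendsto (tendsto_const_div_atTop_nhds_zero_nat ‖z‖) (hcone.mono fun n h => h.2.2)
  exact ⟨le_antisymm him' him, hre⟩

theorem exP_inter_sphere_nonempty {n : ℕ} (hn : 1 ≤ n) {r : ℝ} (hr : 0 < r) :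
    (exP n ∩ sphere 0 r).Nonempty := by
  obtain ⟨t, ht⟩ := exists_between (one_div_pos.2 (Nat.cast_pos.2 hn) : (0 : ℝ) < 1 / n)
  refine ⟨Complex.polarCoord.symm (r, t), ?_, ?_⟩
  · rw [exP_eq_image_polarCoord_symm]
    exact mem_image_of_mem _ (Or.inr ⟨hr, ht⟩)
  · simp [abs_of_pos hr]

/-- Example: the sets `Pₙ = {|z| > n} ∪ {0 < arg z < 1/n}`, `n ≥ 1`, are open, connected,
with compact frontier, and decreasing; their intersection is empty, but the intersection
of their closures is the nonnegative real axis, which is nonempty. In particular `(Pₙ)`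
does not leave compact subsets of `ℂ`: it meets every circle centered at the origin. -/
theorem exP_does_not_leave_compacts :
    (∀ n : ℕ, 1 ≤ n → IsOpen (exP n) ∧ IsConnected (exP n) ∧ IsCompact (frontier (exP n))) ∧
    (∀ n : ℕ, 1 ≤ n → exP (n + 1) ⊆ exP n) ∧
    (⋂ (n : ℕ) (_ : 1 ≤ n), exP n) = ∅ ∧
    (⋂ (n : ℕ) (_ : 1 ≤ n), closure (exP n)) = {z : ℂ | z.im = 0 ∧ 0 ≤ z.re} ∧
    ({z : ℂ | z.im = 0 ∧ 0 ≤ z.re} : Set ℂ).Nonempty ∧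
    (∀ r : ℝ, 0 < r → ∀ n : ℕ, 1 ≤ n → (exP n ∩ Metric.sphere (0 : ℂ) r).Nonempty) ∧
    ¬ (∀ K : Set ℂ, IsCompact K → ∃ n₀ : ℕ, ∀ n ≥ n₀, 1 ≤ n → K ∩ exP n = ∅) := by
  refine ⟨fun n hn => ⟨isOpen_exP n, isConnected_exP hn, isCompact_frontier_exP n⟩,
    fun n hn => exP_subset_exP hn n.le_succ, ?_, iInter_closure_exP, ⟨0, by simp⟩,
    fun r hr n hn => exP_inter_sphere_nonempty hn hr, ?_⟩
  · refine eq_empty_iff_forall_notMem.2 fun z hz => ?_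
    obtain ⟨n, hn, hzn⟩ := ((eventually_ge_atTop 1).and (eventually_notMem_exP z)).exists
    exact hzn (mem_iInter₂.1 hz n hn)
  · intro h
    obtain ⟨n₀, hn₀⟩ := h _ (isCompact_sphere (0 : ℂ) 1)
    obtain ⟨z, hzK, hzP⟩ := exP_inter_sphere_nonempty (le_max_left 1 n₀) one_pos
    exact (hn₀ _ (le_max_right _ _) (le_max_left _ _)).subset ⟨hzP, hzK⟩
end

section
/- Let f : ℂ → ℂ be a function, let α ∈ ℝ, ε ∈ (0,1) and δ > 0, and suppose that |f(z) − e^{iα}·z| < ε·|z| for every z ∈ ℂ with |z| < δ. Let z = r·e^{iθ} with 0 < r < δ and θ ∈ ℝ, and set r' = |f(z)|. Then there exists a unique real number θ' such that: (1) f(z) = r'·e^{iθ'}; (2) |r' − r| < ε·r; and (3) |θ' − (θ + α)| < (π/2)·ε. -/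
open Complex Real

/-!
Rotating `f z` by `e^{-i(θ+α)}` gives a point `u` with `|u - r| < ε r`. Then `u` lies in the
right half-plane, and since `r |sin (arg u)|` is the distance from `r` to the line through `0`
and `u`, we get `|sin (arg u)| < ε`; Jordan's inequality `(2/π)|x| ≤ |sin x|` then gives
`|arg u| < (π/2) ε`.
Two angles satisfying the estimate differ by less than `π ε < 2π`, hence coincide.
-/

theorem Complex.eq_of_exp_mul_I_eq_of_abs_sub_lt {x y : ℝ} (h : exp (x * I) = exp (y * I))
    (hxy : |x - y| < 2 * π) : x = y := by
  obtain ⟨n, hn⟩ := exp_eq_exp_iff_exists_int.1 h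
  have hsub : x - y = n * (2 * π) := by
    have : (x : ℂ) = (y + n * (2 * π) : ℝ) := by
      apply mul_right_cancel₀ I_ne_zero
      push_cast
      linear_combination hn
    linarith [ofReal_injective this]
  have hn0 : n = 0 := by
    rw [hsub, abs_mul, abs_of_pos two_pi_pos] at hxy
    have : |(n : ℝ)| < 1 := (mul_lt_iff_lt_one_left two_pi_pos).1 hxy
    exact Int.abs_lt_one_iff.1 (by exact_mod_cast this)
  simpa [hn0, sub_eq_zero] using hsub

theorem Complex.abs_mul_sin_arg_le_norm_sub (u : ℂ) (r : ℝ) :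
    |r * Real.sin (arg u)| ≤ ‖u - r‖ := by
  have hrot : (u - r) * exp ((-arg u : ℝ) * I) = ‖u‖ - r * exp ((-arg u : ℝ) * I) := by
    conv_lhs => rw [← norm_mul_exp_arg_mul_I u]
    rw [sub_mul, mul_assoc, ← exp_add]
    simp
  calc |r * Real.sin (arg u)| = |((u - r) * exp ((-arg u : ℝ) * I)).im| := by
        rw [hrot, sub_im, ofReal_im, im_ofReal_mul, exp_ofReal_mul_I_im, Real.sin_neg]
        simp
    _ ≤ ‖(u - r) * exp ((-arg u : ℝ) * I)‖ := abs_im_le_norm _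
    _ = ‖u - r‖ := by rw [norm_mul, norm_exp_ofReal_mul_I, mul_one]

theorem Complex.abs_arg_lt_of_norm_sub_lt {u : ℂ} {r ε : ℝ} (hr : 0 < r) (hε : ε ≤ 1)
    (h : ‖u - r‖ < ε * r) : |arg u| < π / 2 * ε := by
  have hre : 0 < u.re := by
    have := (abs_re_le_norm (u - r)).trans_lt h
    rw [sub_re, ofReal_re] at this
    nlinarith [neg_abs_le (u.re - r)]
  have harg : |arg u| ≤ π / 2 := (abs_arg_lt_pi_div_two_iff.2 (Or.inl hre)).le
  have hjordan : r * (2 / π * |arg u|) < r * ε :=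
    calc r * (2 / π * |arg u|) ≤ r * |Real.sin (arg u)| := by gcongr; exact mul_abs_le_abs_sin harg
      _ = |r * Real.sin (arg u)| := by rw [abs_mul, abs_of_pos hr]
      _ ≤ ‖u - r‖ := abs_mul_sin_arg_le_norm_sub u r
      _ < r * ε := by linarith
  have := (mul_lt_mul_iff_right₀ hr).1 hjordan
  rw [div_mul_eq_mul_div, div_lt_iff₀ pi_pos] at this
  linarith

theorem Complex.existsUnique_polar_of_norm_sub_lt {v : ℂ} {r φ ε : ℝ} (hr : 0 < r) (hε : ε ≤ 1)
    (h : ‖v - r * exp (φ * I)‖ < ε * r) :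
    ∃! φ' : ℝ, v = ‖v‖ * exp (φ' * I) ∧ |‖v‖ - r| < ε * r ∧ |φ' - φ| < π / 2 * ε := by
  set u := v * exp ((-φ : ℝ) * I) with hu
  have hunit : exp (φ * I) * exp ((-φ : ℝ) * I) = 1 := by rw [← exp_add]; simp
  have hvu : v = u * exp (φ * I) := by rw [hu, mul_assoc, mul_comm (exp _), hunit, mul_one]
  have hnorm_u : ‖u‖ = ‖v‖ := by rw [hu, norm_mul, norm_exp_ofReal_mul_I, mul_one]
  have hur : ‖u - r‖ < ε * r := by
    rwa [hu, show v * exp ((-φ : ℝ) * I) - r = (v - r * exp (φ * I)) * exp ((-φ : ℝ) * I) by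
      rw [sub_mul, mul_assoc, hunit, mul_one], norm_mul, norm_exp_ofReal_mul_I, mul_one]
  have harg := abs_arg_lt_of_norm_sub_lt hr hε hur
  have hradius : |‖v‖ - r| < ε * r := by
    have := abs_norm_sub_norm_le v (r * exp (φ * I))
    rw [norm_mul, norm_exp_ofReal_mul_I, mul_one, norm_real, Real.norm_of_nonneg hr.le] at this
    exact this.trans_lt h
  have hv0 : (‖v‖ : ℂ) ≠ 0 := by
    have := (abs_lt.1 hradius).1
    exact_mod_cast (show 0 < ‖v‖ by nlinarith).ne'
  have hpolar : v = ‖v‖ * exp ((φ + arg u : ℝ) * I) := by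
    conv_lhs => rw [hvu, ← norm_mul_exp_arg_mul_I u, hnorm_u]
    rw [mul_assoc, ← exp_add]
    push_cast; ring_nf
  refine ⟨φ + arg u, ⟨hpolar, hradius, by simpa using harg⟩, ?_⟩
  rintro ψ ⟨hψ, -, hψφ⟩
  refine eq_of_exp_mul_I_eq_of_abs_sub_lt (mul_left_cancel₀ hv0 (hψ.symm.trans hpolar)) ?_
  calc |ψ - (φ + arg u)| ≤ |ψ - φ| + |arg u| := by
        simpa [sub_add_eq_sub_sub] using abs_sub (ψ - φ) (arg u)
    _ < π / 2 * ε + π / 2 * ε := add_lt_add hψφ harg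
    _ < 2 * π := by nlinarith [pi_pos]

theorem polar_estimate_elliptic_general
    (f : ℂ → ℂ) (α ε δ : ℝ) (hε1 : ε < 1)
    (hf : ∀ z : ℂ, ‖z‖ < δ →
      ‖f z - Complex.exp (α * Complex.I) * z‖ < ε * ‖z‖)
    (r θ : ℝ) (hr0 : 0 < r) (hrδ : r < δ)
    (z : ℂ) (hz : z = (r : ℂ) * Complex.exp (θ * Complex.I)) :
    ∃! θ' : ℝ,
      f z = ((‖f z‖ : ℝ) : ℂ) * Complex.exp (θ' * Complex.I) ∧
      |‖f z‖ - r| < ε * r ∧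
      |θ' - (θ + α)| < π / 2 * ε := by
  have hnorm : ‖z‖ = r := by
    rw [hz, norm_mul, norm_exp_ofReal_mul_I, mul_one, norm_real, Real.norm_of_nonneg hr0.le]
  have hrotate : exp (α * I) * z = r * exp ((θ + α : ℝ) * I) := by
    rw [hz, mul_left_comm, ← Complex.exp_add]; push_cast; ring_nf
  have hclose := hf z (hnorm ▸ hrδ)
  rw [hrotate, hnorm] at hclose
  exact existsUnique_polar_of_norm_sub_lt hr0 hε1.le hclose

/-- Polar estimate near an elliptic fixed point: if `|f(z) − e^{iα}z| < ε·|z|` for all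
`|z| < δ`, and `z = r·e^{iθ}` with `0 < r < δ`, then there is a unique real `θ'` with
`f(z) = |f(z)|·e^{iθ'}`, `||f(z)| − r| < ε·r` and `|θ' − (θ + α)| < (π/2)·ε`. -/
theorem polar_estimate_elliptic
    (f : ℂ → ℂ) (α ε δ : ℝ) (hε0 : 0 < ε) (hε1 : ε < 1) (hδ : 0 < δ)
    (hf : ∀ z : ℂ, ‖z‖ < δ →
      ‖f z - Complex.exp (α * Complex.I) * z‖ < ε * ‖z‖)
    (r θ : ℝ) (hr0 : 0 < r) (hrδ : r < δ)
    (z : ℂ) (hz : z = (r : ℂ) * Complex.exp (θ * Complex.I)) :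
    ∃! θ' : ℝ,
      f z = ((‖f z‖ : ℝ) : ℂ) * Complex.exp (θ' * Complex.I) ∧
      |‖f z‖ - r| < ε * r ∧
      |θ' - (θ + α)| < π / 2 * ε :=
  polar_estimate_elliptic_general f α ε δ hε1 hf r θ hr0 hrδ z hz
end

section
/- Let a, b, α, ε ∈ ℝ with a < b, b − a < 2π, α − (π/2)·ε > 0 and α + (π/2)·ε < 2π. Suppose θ ∈ (a,b), that θ' ∈ ℝ satisfies |θ' − (θ + α)| < (π/2)·ε, and that k ∈ ℤ is such that θ' − 2kπ ∈ (a,b). Then k = 0 or k = 1. -/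
open Real

/-- Arithmetic content of Lemma 3.6: if `θ ∈ (a,b)` with `b − a < 2π`,
`|θ' − (θ + α)| < (π/2)·ε` with `0 < α − (π/2)·ε` and `α + (π/2)·ε < 2π`, and
`θ' − 2kπ ∈ (a,b)` for an integer `k`, then `k = 0` or `k = 1`. -/
theorem lifted_arc_winding_zero_or_one
    (a b α ε θ θ' : ℝ) (k : ℤ)
    (hab : a < b) (hlen : b - a < 2 * π)
    (hα1 : 0 < α - π / 2 * ε) (hα2 : α + π / 2 * ε < 2 * π)
    (hθ : θ ∈ Set.Ioo a b)
    (hθ' : |θ' - (θ + α)| < π / 2 * ε)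
    (hk : θ' - 2 * (k : ℝ) * π ∈ Set.Ioo a b) :
    k = 0 ∨ k = 1 := by
  obtain ⟨h1, h2⟩ := hθ
  obtain ⟨h3, h4⟩ := hk
  rw [abs_lt] at hθ'
  have hπ := pi_pos
  have hk1 : (-1 : ℝ) < (k : ℝ) := by nlinarith [hθ'.1, hθ'.2]
  have hk2 : (k : ℝ) < 2 := by nlinarith [hθ'.1, hθ'.2]
  have : (-1 : ℤ) < k := by exact_mod_cast hk1
  have : k < 2 := by exact_mod_cast hk2
  omega
end
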